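/- The family of real-analytic covariance functions on [0,1]^2 is T_δ-identifiable: any two members that coincide on T_δ coincide everywhere on [0,1]^2. -/
import Mathlib

open Set

/-- The unit square `[0,1]²` in `ℝ × ℝ`. -/
def unitSquare : Set (ℝ × ℝ) := (Set.Icc 0 1) ×ˢ (Set.Icc 0 1)

/-- A family `C` of functions on `[0,1]²` is `T_δ`-identifiable if any two members
agreeing on the band `T_δ = {(s,t) ∈ [0,1]² : |s−t| ≤ δ}` agree on all of `[0,1]²`. -/
def TIdentifiable (δ : ℝ) (C : Set (ℝ × ℝ → ℝ)) : Prop :=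
  ∀ γ₁ ∈ C, ∀ γ₂ ∈ C,
    (∀ p ∈ unitSquare, |p.1 - p.2| ≤ δ → γ₁ p = γ₂ p) →
    ∀ p ∈ unitSquare, γ₁ p = γ₂ p

/-- The family of real-analytic covariance functions on `[0,1]²` is `T_δ`-identifiable. -/
theorem analytic_family_TIdentifiable (δ : ℝ) (hδ : 0 < δ) :
    TIdentifiable δ {γ : ℝ × ℝ → ℝ | AnalyticOn ℝ γ unitSquare} := by
  intro γ₁ h₁ γ₂ h₂ hband
  simp only [Set.mem_setOf_eq] at h₁ h₂
  set U : Set (ℝ × ℝ) := (Set.Ioo (0:ℝ) 1) ×ˢ (Set.Ioo (0:ℝ) 1) with hUdef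
  have hUopen : IsOpen U := (isOpen_Ioo).prod isOpen_Ioo
  have hUsub : U ⊆ unitSquare := Set.prod_mono Set.Ioo_subset_Icc_self Set.Ioo_subset_Icc_self
  have hUpre : IsPreconnected U :=
    ((convex_Ioo (0:ℝ) 1).prod (convex_Ioo (0:ℝ) 1)).isPreconnected
  -- analyticity on the neighborhood of each interior point
  have hnhd : ∀ x ∈ U, unitSquare ∈ nhds x := fun x hx =>
    Filter.mem_of_superset (hUopen.mem_nhds hx) hUsub
  have h₁' : AnalyticOnNhd ℝ γ₁ U := by
    intro x hx
    have := (h₁ x (hUsub hx)).mono_of_mem_nhdsWithin (t := Set.univ)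
      (by simpa [nhdsWithin_univ] using hnhd x hx)
    simpa using this
  have h₂' : AnalyticOnNhd ℝ γ₂ U := by
    intro x hx
    have := (h₂ x (hUsub hx)).mono_of_mem_nhdsWithin (t := Set.univ)
      (by simpa [nhdsWithin_univ] using hnhd x hx)
    simpa using this
  -- the center point
  have hz₀ : ((1/2 : ℝ), (1/2 : ℝ)) ∈ U := by
    constructor <;> constructor <;> norm_num
  -- eventual equality near the center
  have hev : γ₁ =ᶠ[nhds ((1/2 : ℝ), (1/2 : ℝ))] γ₂ := by
    have hr : (0:ℝ) < min (δ/2) (1/2) := by positivity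
    filter_upwards [Metric.ball_mem_nhds _ hr] with p hp
    rw [Metric.mem_ball, Prod.dist_eq] at hp
    have h1 : dist p.1 (1/2 : ℝ) < min (δ/2) (1/2) := lt_of_le_of_lt (le_max_left _ _) hp
    have h2 : dist p.2 (1/2 : ℝ) < min (δ/2) (1/2) := lt_of_le_of_lt (le_max_right _ _) hp
    rw [Real.dist_eq, abs_lt] at h1 h2
    have hmem : p ∈ unitSquare := by
      constructor <;> constructor <;>
        [skip; skip; skip; skip] <;>
        · have := h1.1; have := h1.2; have := h2.1; have := h2.2
          have hd1 := min_le_left (δ/2) (1/2)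
          have hd2 := min_le_right (δ/2) (1/2)
          simp only [unitSquare] at *
          nlinarith [min_le_right (δ/2) (1/2)]
    apply hband p hmem
    have : |p.1 - p.2| ≤ |p.1 - 1/2| + |(1/2 : ℝ) - p.2| := by
      calc |p.1 - p.2| = |(p.1 - 1/2) + ((1/2 : ℝ) - p.2)| := by ring_nf
        _ ≤ _ := abs_add_le _ _
    have ha : |p.1 - 1/2| < δ/2 := lt_of_lt_of_le (by rw [abs_lt]; exact h1) (min_le_left _ _)
    have hb : |(1/2 : ℝ) - p.2| < δ/2 := by
      rw [abs_sub_comm]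
      exact lt_of_lt_of_le (by rw [abs_lt]; exact h2) (min_le_left _ _)
    linarith
  -- identity theorem on the interior
  have hEqU : Set.EqOn γ₁ γ₂ U :=
    h₁'.eqOn_of_preconnected_of_eventuallyEq h₂' hUpre hz₀ hev
  -- extend to the closure
  have hclos : unitSquare ⊆ closure U := by
    rw [hUdef, closure_prod_eq, closure_Ioo (by norm_num : (0:ℝ) ≠ 1)]
    exact subset_rfl
  exact hEqU.of_subset_closure h₁.continuousOn h₂.continuousOn hUsub hclos
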